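/- arXiv:1904.03968 — 3 statements merged into one kernel-verified Lean document; each statement's English description precedes it below -/
import Mathlib

section
/- The lower bound of the virtual value function is achieved by the 'sufficient statistic' extractor E*(x) = q(·|x): with this choice, H(y|E*(x)) = H(y|x) and H(z | E*(x), q_y(·|E*(x))) = H(z | q_y(·|E*(x))). -/
/-!
The fibre of `E*` through `x` consists of the `x'` with `q(·|x') = q(·|x)`, so conditioning on the
event `E* = E*(x)` reproduces the conditional law `q(·|x)`: `E*` is a sufficient statistic, and the
conditional entropy given a sufficient statistic equals the conditional entropy given `x` itself.
In particular `q_y(·|E*(x)) = E*(x)`, so the pair `(E*(x), q_y(·|E*(x)))` has the same fibres as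
`q_y(·|E*(x))`, and a conditional entropy depends only on the partition into fibres.
-/

open Finset

/-- Probability of the event `f x = t` under the joint pmf `q` on `X × Z`. -/
noncomputable def fiberPr {X Z T : Type*} [Fintype X] [Fintype Z] [DecidableEq T]
    (q : X × Z → ℝ) (f : X → T) (t : T) : ℝ :=
  ∑ x, ∑ z, if f x = t then q (x, z) else 0

/-- Conditional pmf of `z` given the event `f x = t`. -/
noncomputable def fiberCond {X Z T : Type*} [Fintype X] [Fintype Z] [DecidableEq T]
    (q : X × Z → ℝ) (f : X → T) (t : T) (z : Z) : ℝ :=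
  (∑ x, if f x = t then q (x, z) else 0) / fiberPr q f t

/-- Conditional Shannon entropy `H(z | f(x))` for the joint pmf `q` on `X × Z`. -/
noncomputable def condEnt {X Z T : Type*} [Fintype X] [Fintype Z] [DecidableEq T]
    (q : X × Z → ℝ) (f : X → T) : ℝ :=
  ∑ t ∈ Finset.image f Finset.univ,
    fiberPr q f t *
      ∑ z, fiberCond q f t z * (-Real.log (fiberCond q f t z))

noncomputable def shannonEnt {Z : Type*} [Fintype Z] (p : Z → ℝ) : ℝ :=
  ∑ z, p z * -Real.log (p z)

noncomputable def condPmf {X Z : Type*} [Fintype Z] (q : X × Z → ℝ) (x : X) : Z → ℝ :=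
  fun z => q (x, z) / ∑ z', q (x, z')

section

variable {X Z T T' : Type*} [Fintype X] [Fintype Z] [DecidableEq T] [DecidableEq T']
  (q : X × Z → ℝ)

lemma fiberPr_eq_sum_filter (f : X → T) (t : T) :
    fiberPr q f t = ∑ x with f x = t, ∑ z, q (x, z) := by
  rw [fiberPr, sum_filter]
  exact sum_congr rfl fun x _ => by split_ifs <;> simp

lemma condEnt_eq_sum (f : X → T) :
    condEnt q f = ∑ x, (∑ z, q (x, z)) * shannonEnt (fiberCond q f (f x)) := by
  refine sum_image' _ fun x _ => ?_
  rw [fiberPr_eq_sum_filter, sum_mul]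
  exact sum_congr rfl fun x' hx' => by rw [(mem_filter.mp hx').2]; rfl

lemma fiberCond_id [DecidableEq X] (x : X) : fiberCond q id x = condPmf q x := by
  funext z
  simp [fiberCond, fiberPr, condPmf]

lemma fiberCond_eq_condPmf_of_sufficient {f : X → T} (hpos : ∀ x, 0 < ∑ z, q (x, z))
    (hf : ∀ x x', f x = f x' → condPmf q x = condPmf q x') (x : X) :
    fiberCond q f (f x) = condPmf q x := by
  have hPr : 0 < fiberPr q f (f x) := by
    rw [fiberPr_eq_sum_filter]
    exact sum_pos (fun x' _ => hpos x') ⟨x, mem_filter.mpr ⟨mem_univ x, rfl⟩⟩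
  funext z
  rw [fiberCond, div_eq_iff hPr.ne', fiberPr_eq_sum_filter, mul_sum, ← sum_filter]
  refine sum_congr rfl fun x' hx' => ?_
  have hcond : condPmf q x' z = condPmf q x z := congrFun (hf x' x (mem_filter.mp hx').2) z
  rw [← hcond, condPmf, div_mul_cancel₀ _ (hpos x').ne']

theorem condEnt_eq_condEnt_id_of_sufficient [DecidableEq X] {f : X → T}
    (hpos : ∀ x, 0 < ∑ z, q (x, z))
    (hf : ∀ x x', f x = f x' → condPmf q x = condPmf q x') :
    condEnt q f = condEnt q id := by
  simp only [condEnt_eq_sum, fiberCond_eq_condPmf_of_sufficient q hpos hf, id, fiberCond_id]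

lemma fiberCond_congr_of_fibers {f : X → T} {g : X → T'}
    (hfg : ∀ x x', f x' = f x ↔ g x' = g x) (x : X) :
    fiberCond q f (f x) = fiberCond q g (g x) := by
  funext z
  simp only [fiberCond, fiberPr, hfg x]

theorem condEnt_congr_of_fibers {f : X → T} {g : X → T'}
    (hfg : ∀ x x', f x' = f x ↔ g x' = g x) :
    condEnt q f = condEnt q g := by
  simp only [condEnt_eq_sum, fiberCond_congr_of_fibers q hfg]

end

theorem optimal_extractor_achieves_bound_general
    {X Y Z : Type*} [Fintype X] [Fintype Y] [Fintype Z]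
    [DecidableEq X] [DecidableEq (Y → ℝ)]
    (qXY : X × Y → ℝ)
    (qXZ : X × Z → ℝ)
    (hpos : ∀ x, 0 < ∑ y, qXY (x, y))
    (Estar : X → (Y → ℝ))
    (hEstar : ∀ x, Estar x = fun y => qXY (x, y) / ∑ y', qXY (x, y'))
    (ψ : X → (Y → ℝ))
    (hψ : ∀ x, ψ x = fiberCond qXY Estar (Estar x)) :
    condEnt qXY Estar = condEnt qXY (id : X → X) ∧
    condEnt qXZ (fun x => (Estar x, ψ x)) = condEnt qXZ ψ := by
  obtain rfl : Estar = condPmf qXY := funext hEstar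
  have hsufficient : ∀ x x', condPmf qXY x = condPmf qXY x' → condPmf qXY x = condPmf qXY x' :=
    fun _ _ h => h
  obtain rfl : ψ = condPmf qXY :=
    funext fun x => (hψ x).trans (fiberCond_eq_condPmf_of_sufficient qXY hpos hsufficient x)
  refine ⟨condEnt_eq_condEnt_id_of_sufficient qXY hpos hsufficient, ?_⟩
  exact condEnt_congr_of_fibers qXZ fun x x' => by simp

/-- The lower bound of the virtual value function is achieved by the
sufficient-statistic extractor `E*(x) = q(·|x)`:
`H(y|E*(x)) = H(y|x)` and
`H(z | E*(x), q_y(·|E*(x))) = H(z | q_y(·|E*(x)))`. -/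
theorem optimal_extractor_achieves_bound
    {X Y Z : Type*} [Fintype X] [Fintype Y] [Fintype Z]
    [Nonempty X] [Nonempty Y] [Nonempty Z]
    [DecidableEq X] [DecidableEq (Y → ℝ)]
    (q : X × Y × Z → ℝ) (hq0 : ∀ p, 0 ≤ q p) (hq1 : ∑ p, q p = 1)
    (qXY : X × Y → ℝ) (hqXY : ∀ x y, qXY (x, y) = ∑ z, q (x, y, z))
    (qXZ : X × Z → ℝ) (hqXZ : ∀ x z, qXZ (x, z) = ∑ y, q (x, y, z))
    (hpos : ∀ x, 0 < ∑ y, qXY (x, y))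
    (Estar : X → (Y → ℝ))
    (hEstar : ∀ x, Estar x = fun y => qXY (x, y) / ∑ y', qXY (x, y'))
    (ψ : X → (Y → ℝ))
    (hψ : ∀ x, ψ x = fiberCond qXY Estar (Estar x)) :
    condEnt qXY Estar = condEnt qXY (id : X → X) ∧
    condEnt qXZ (fun x => (Estar x, ψ x)) = condEnt qXZ ψ :=
  optimal_extractor_achieves_bound_general qXY qXZ hpos Estar hEstar ψ hψ
end

section
/- If an extractor E satisfies H(y|E(x)) = H(y|x), then the conditional distribution of y given E(x) equals the conditional distribution of y given x, i.e., q(y|E(x)) = q(y|x) almost surely. -/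
open Finset

section Aux

variable {X Y : Type*} [Fintype X] [Fintype Y] [DecidableEq X]

lemma fiberPr_id (q : X × Y → ℝ) (x : X) :
    fiberPr q (id : X → X) x = ∑ y, q (x, y) := by
  unfold fiberPr
  rw [Finset.sum_comm]
  simp

lemma fiberCond_id_s7 (q : X × Y → ℝ) (x : X) (y : Y) :
    fiberCond q (id : X → X) x y = q (x, y) / ∑ y', q (x, y') := by
  unfold fiberCond
  rw [fiberPr_id]
  simp

lemma mulNegLog_eq (p : ℝ) : p * (-Real.log p) = Real.negMulLog p := by
  simp [Real.negMulLog]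

end Aux

/-- Equality case of the data-processing inequality: if
`H(y|E(x)) = H(y|x)` then the conditional distribution of `y` given `E(x)`
equals the conditional distribution of `y` given `x` on the support. -/
theorem cond_eq_of_condEnt_eq
    {X Y F : Type*} [Fintype X] [Fintype Y] [Fintype F]
    [Nonempty X] [Nonempty Y] [Nonempty F] [DecidableEq X] [DecidableEq F]
    (q : X × Y → ℝ) (hq0 : ∀ p, 0 ≤ q p) (hq1 : ∑ p, q p = 1)
    (hpos : ∀ x, 0 < ∑ y, q (x, y))
    (E : X → F)
    (h : condEnt q E = condEnt q (id : X → X)) :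
    ∀ x, fiberCond q E (E x) = fun y => q (x, y) / ∑ y', q (x, y') := by
  classical
  set P : X → ℝ := fun x => ∑ y, q (x, y) with hPdef
  have hPpos : ∀ x, 0 < P x := hpos
  set cond : X → Y → ℝ := fun x y => q (x, y) / P x with hconddef
  set fib : F → Finset X := fun t => univ.filter (fun x => E x = t) with hfibdef
  have hfiberPr : ∀ t, fiberPr q E t = ∑ x ∈ fib t, P x := by
    intro t
    unfold fiberPr
    rw [hfibdef, Finset.sum_filter]
    refine Finset.sum_congr rfl fun x _ => ?_
    split <;> simp [hPdef]
  have hPrpos : ∀ t ∈ image E univ, 0 < fiberPr q E t := by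
    intro t ht
    obtain ⟨x, _, rfl⟩ := Finset.mem_image.mp ht
    rw [hfiberPr]
    exact Finset.sum_pos (fun x _ => hPpos x) ⟨x, by simp [hfibdef]⟩
  set w : F → X → ℝ := fun t x => P x / fiberPr q E t with hwdef
  have hwpos : ∀ t ∈ image E univ, ∀ x ∈ fib t, 0 < w t x := fun t ht x _ =>
    div_pos (hPpos x) (hPrpos t ht)
  have hwsum : ∀ t ∈ image E univ, ∑ x ∈ fib t, w t x = 1 := by
    intro t ht
    rw [hwdef]
    dsimp only
    rw [← Finset.sum_div, ← hfiberPr, div_self (hPrpos t ht).ne']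
  have hcond_nonneg : ∀ x y, 0 ≤ cond x y := fun x y =>
    div_nonneg (hq0 _) (hPpos x).le
  have hmix : ∀ t ∈ image E univ, ∀ y,
      fiberCond q E t y = ∑ x ∈ fib t, w t x * cond x y := by
    intro t ht y
    have h1 : (∑ x, if E x = t then q (x, y) else 0) = ∑ x ∈ fib t, q (x, y) := by
      rw [hfibdef, Finset.sum_filter]
    unfold fiberCond
    rw [h1, Finset.sum_div]
    refine Finset.sum_congr rfl fun x hx => ?_
    rw [hwdef, hconddef]
    dsimp only
    rw [div_mul_div_comm, mul_comm (P x)]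
    rw [mul_div_mul_right _ _ (hPpos x).ne']
  -- entropies
  set H1 : F → ℝ := fun t => ∑ y, Real.negMulLog (fiberCond q E t y) with hH1
  set H0 : X → ℝ := fun x => ∑ y, Real.negMulLog (cond x y) with hH0
  have hE1 : condEnt q E = ∑ t ∈ image E univ, fiberPr q E t * H1 t := by
    unfold condEnt
    refine Finset.sum_congr rfl fun t _ => ?_
    rw [hH1]
    congr 1
    exact Finset.sum_congr rfl fun y _ => mulNegLog_eq _
  have hE0 : condEnt q (id : X → X) = ∑ x, P x * H0 x := by
    unfold condEnt
    rw [Finset.image_id]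
    refine Finset.sum_congr rfl fun x _ => ?_
    rw [fiberPr_id, hH0]
    congr 1
    refine Finset.sum_congr rfl fun y _ => ?_
    rw [fiberCond_id_s7, mulNegLog_eq]
  -- regroup H(y|x) by fibers
  have hsplit : (∑ x, P x * H0 x) =
      ∑ t ∈ image E univ, ∑ x ∈ fib t, P x * H0 x := by
    rw [hfibdef]
    exact (Finset.sum_fiberwise_of_maps_to (fun x _ => Finset.mem_image_of_mem E (mem_univ x))
      (fun x => P x * H0 x)).symm
  have hinner : ∀ t ∈ image E univ,
      (∑ x ∈ fib t, P x * H0 x) = fiberPr q E t * ∑ x ∈ fib t, w t x * H0 x := by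
    intro t ht
    rw [Finset.mul_sum]
    refine Finset.sum_congr rfl fun x hx => ?_
    rw [hwdef]
    dsimp only
    rw [div_mul_eq_mul_div, mul_div_assoc', mul_comm (fiberPr q E t),
      mul_div_assoc, div_self (hPrpos t ht).ne', mul_one]
  -- Jensen per (t, y)
  have jensen : ∀ t ∈ image E univ, ∀ y,
      ∑ x ∈ fib t, w t x * Real.negMulLog (cond x y) ≤
        Real.negMulLog (fiberCond q E t y) := by
    intro t ht y
    rw [hmix t ht y]
    have := Real.concaveOn_negMulLog.le_map_sum (t := fib t) (w := w t)
      (p := fun x => cond x y) (fun x hx => (hwpos t ht x hx).le) (hwsum t ht)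
      (fun x hx => hcond_nonneg x y)
    simpa [smul_eq_mul] using this
  -- the deficit per fiber
  set D : F → ℝ := fun t => ∑ y, (Real.negMulLog (fiberCond q E t y) -
      ∑ x ∈ fib t, w t x * Real.negMulLog (cond x y)) with hD
  have hDnonneg : ∀ t ∈ image E univ, 0 ≤ D t := fun t ht =>
    Finset.sum_nonneg fun y _ => sub_nonneg.mpr (jensen t ht y)
  have hDform : ∀ t ∈ image E univ,
      D t = H1 t - ∑ x ∈ fib t, w t x * H0 x := by
    intro t ht
    rw [hD, hH1]
    dsimp only
    rw [Finset.sum_sub_distrib]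
    congr 1
    rw [Finset.sum_comm]
    refine (Finset.sum_congr rfl fun x hx => ?_).symm
    rw [hH0, Finset.mul_sum]
  have hsum0 : ∑ t ∈ image E univ, fiberPr q E t * D t = 0 := by
    have h2 : condEnt q E - condEnt q (id : X → X) = 0 := by rw [h]; ring
    rw [hE1, hE0, hsplit, ← Finset.sum_sub_distrib] at h2
    rw [← h2]
    refine Finset.sum_congr rfl fun t ht => ?_
    rw [hDform t ht, hinner t ht, mul_sub]
  have hD0 : ∀ t ∈ image E univ, D t = 0 := by
    intro t ht
    have := (Finset.sum_eq_zero_iff_of_nonneg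
      (fun t ht => mul_nonneg (hPrpos t ht).le (hDnonneg t ht))).mp hsum0 t ht
    exact (mul_eq_zero.mp this).resolve_left (hPrpos t ht).ne'
  -- per-y equality
  have hyeq : ∀ t ∈ image E univ, ∀ y,
      Real.negMulLog (fiberCond q E t y) =
        ∑ x ∈ fib t, w t x * Real.negMulLog (cond x y) := by
    intro t ht y
    have := (Finset.sum_eq_zero_iff_of_nonneg
      (fun y _ => sub_nonneg.mpr (jensen t ht y))).mp (hD0 t ht) y (mem_univ y)
    linarith [this]
  -- conclude via strict concavity
  intro x
  funext y
  have ht : E x ∈ image E univ := Finset.mem_image_of_mem E (mem_univ x)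
  have hx : x ∈ fib (E x) := by simp [hfibdef]
  have heq : Real.negMulLog (∑ x' ∈ fib (E x), w (E x) x' • cond x' y) =
      ∑ x' ∈ fib (E x), w (E x) x' • Real.negMulLog (cond x' y) := by
    simp only [smul_eq_mul]
    rw [← hmix (E x) ht y]
    exact hyeq (E x) ht y
  have := (Real.strictConcaveOn_negMulLog.map_sum_eq_iff
    (fun x' hx' => hwpos (E x) ht x' hx') (hwsum (E x) ht)
    (fun x' hx' => hcond_nonneg x' y)).mp heq x hx
  have hfinal : cond x y = fiberCond q E (E x) y := by
    rw [this, hmix (E x) ht y]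
    simp [smul_eq_mul]
  rw [← hfinal, hconddef]
end

section
/- Minimizing the value function V(E,P,D) = L_P(P,E) − λ·L_D(D,E;P) over P for fixed E, followed by maximizing over D, yields the virtual value function V(E) = H(y|E(x)) − λ·H(z | E(x), q_y(·|E(x))). -/
open Finset

/-!
By Gibbs' inequality `log u ≤ u - 1`, the cross entropy `∑ m(x,z) · (-log K(g x, z))` of any
strictly positive kernel `K` dominates the conditional entropy `H(z | g x)`, with equality at the
true conditional.  That conditional may vanish and so is not admissible, but its additive
smoothings `(mass + ε) / (total + |Z| ε)` are, and their cross entropy is continuous at `ε = 0`;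
so `H(z | g x)` is the infimum over admissible kernels.  Since `P(·|E x)` and `q_y(·|E x)` are
functions of `E x`, conditioning on the pair gives the same entropy as conditioning on `E x`.
Hence the supremum over `D` is `L_P(P) - λ H(z | E x)` for every `P`, and its infimum over `P`
is `H(y | E x) - λ H(z | E x)`.
-/

open Real Filter Topology

theorem mul_neg_log_div_le_of_pos {w s p : ℝ} (hw : 0 < w) (hs : 0 < s) (hp : 0 < p) :
    w * -log (w / s) ≤ w * -log p + (s * p - w) := by
  have h := log_le_sub_one_of_pos (div_pos (mul_pos hs hp) hw)
  rw [log_div (mul_pos hs hp).ne' hw.ne', log_mul hs.ne' hp.ne'] at h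
  rw [log_div hw.ne' hs.ne']
  have := mul_le_mul_of_nonneg_left h hw.le
  rw [mul_sub_one, mul_div_cancel₀ _ hw.ne'] at this
  linear_combination this

theorem sum_mul_neg_log_div_sum_le {Z : Type*} [Fintype Z] {w p : Z → ℝ} (hw : ∀ z, 0 ≤ w z)
    (hp : ∀ z, 0 < p z) (hp1 : ∑ z, p z = 1) :
    ∑ z, w z * -log (w z / ∑ z', w z') ≤ ∑ z, w z * -log (p z) := by
  set s := ∑ z', w z'
  have hterm : ∀ z, w z * -log (w z / s) ≤ w z * -log (p z) + (s * p z - w z) := by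
    intro z
    rcases (hw z).eq_or_lt with h0 | h0
    · simp only [← h0, zero_mul, zero_add, sub_zero]
      exact mul_nonneg (sum_nonneg fun z _ => hw z) (hp z).le
    · exact mul_neg_log_div_le_of_pos h0 (h0.trans_le
        (single_le_sum (fun z _ => hw z) (mem_univ z))) (hp z)
  calc ∑ z, w z * -log (w z / s) ≤ ∑ z, (w z * -log (p z) + (s * p z - w z)) :=
        sum_le_sum fun z _ => hterm z
    _ = ∑ z, w z * -log (p z) := by
        rw [sum_add_distrib, sum_sub_distrib, ← mul_sum, hp1]; ring

def IsPosKernel {T Z : Type*} [Fintype Z] (K : T → Z → ℝ) : Prop :=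
  (∀ t z, 0 < K t z) ∧ ∀ t, ∑ z, K t z = 1

section Fibers

variable {X Z T : Type*} [Fintype X] [DecidableEq T] (m : X × Z → ℝ) (g : X → T)

noncomputable def fiberMass (t : T) (z : Z) : ℝ :=
  ∑ x, if g x = t then m (x, z) else 0

theorem fiberMass_nonneg {m : X × Z → ℝ} (hm : ∀ p, 0 ≤ m p) (t : T) (z : Z) :
    0 ≤ fiberMass m g t z :=
  sum_nonneg fun _ _ => ite_nonneg (hm _) le_rfl

theorem le_fiberMass {m : X × Z → ℝ} (hm : ∀ p, 0 ≤ m p) (x : X) (z : Z) :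
    m (x, z) ≤ fiberMass m g (g x) z := by
  unfold fiberMass
  simpa using single_le_sum (f := fun x' => if g x' = g x then m (x', z) else 0)
    (fun _ _ => ite_nonneg (hm _) le_rfl) (mem_univ x)

variable [Fintype Z]

noncomputable def crossEnt (K : T → Z → ℝ) : ℝ :=
  ∑ x, ∑ z, m (x, z) * -log (K (g x) z)

theorem fiberPr_eq_sum_fiberMass (t : T) : fiberPr m g t = ∑ z, fiberMass m g t z :=
  sum_comm

theorem fiberCond_eq_fiberMass_div (t : T) (z : Z) :
    fiberCond m g t z = fiberMass m g t z / fiberPr m g t :=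
  rfl

theorem crossEnt_eq_sum_fiberMass (K : T → Z → ℝ) :
    crossEnt m g K = ∑ t ∈ univ.image g, ∑ z, fiberMass m g t z * -log (K t z) := by
  rw [crossEnt,
    ← sum_fiberwise_of_maps_to fun x _ => mem_image_of_mem g (mem_univ x)]
  refine sum_congr rfl fun t _ => ?_
  rw [sum_comm]
  refine sum_congr rfl fun z _ => ?_
  rw [fiberMass, sum_mul, sum_filter]
  refine sum_congr rfl fun x _ => ?_
  split_ifs with h <;> simp [h]

theorem crossEnt_fiberCond : crossEnt m g (fiberCond m g) = condEnt m g := by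
  rw [crossEnt_eq_sum_fiberMass, condEnt]
  refine sum_congr rfl fun t _ => ?_
  rw [mul_sum]
  refine sum_congr rfl fun z _ => ?_
  rw [fiberCond_eq_fiberMass_div, ← mul_assoc]
  by_cases hs : fiberPr m g t = 0
  · simp [hs]
  · rw [mul_div_cancel₀ _ hs]

variable {m}

theorem fiberMass_le_fiberPr (hm : ∀ p, 0 ≤ m p) (t : T) (z : Z) :
    fiberMass m g t z ≤ fiberPr m g t := by
  rw [fiberPr_eq_sum_fiberMass]
  exact single_le_sum (fun z _ => fiberMass_nonneg g hm t z) (mem_univ z)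

theorem condEnt_le_crossEnt (hm : ∀ p, 0 ≤ m p) {K : T → Z → ℝ} (hK : IsPosKernel K) :
    condEnt m g ≤ crossEnt m g K := by
  rw [← crossEnt_fiberCond, crossEnt_eq_sum_fiberMass, crossEnt_eq_sum_fiberMass]
  refine sum_le_sum fun t _ => ?_
  simp only [fiberCond_eq_fiberMass_div, fiberPr_eq_sum_fiberMass]
  exact sum_mul_neg_log_div_sum_le (fiberMass_nonneg g hm t) (hK.1 t) (hK.2 t)

variable (m) in
noncomputable def smoothedCond (ε : ℝ) (t : T) (z : Z) : ℝ :=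
  (fiberMass m g t z + ε) / (fiberPr m g t + Fintype.card Z * ε)

theorem isPosKernel_smoothedCond [Nonempty Z] (hm : ∀ p, 0 ≤ m p) {ε : ℝ} (hε : 0 < ε) :
    IsPosKernel (smoothedCond m g ε) := by
  have hden : ∀ t, 0 < fiberPr m g t + Fintype.card Z * ε := fun t =>
    add_pos_of_nonneg_of_pos (by
      rw [fiberPr_eq_sum_fiberMass]
      exact sum_nonneg fun z _ => fiberMass_nonneg g hm t z) (by positivity)
  refine ⟨fun t z => div_pos (by linarith [fiberMass_nonneg g hm t z]) (hden t), fun t => ?_⟩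
  simp only [smoothedCond]
  rw [← sum_div, sum_add_distrib, ← fiberPr_eq_sum_fiberMass, sum_const,
    card_univ, nsmul_eq_mul, div_self (hden t).ne']

theorem tendsto_crossEnt_smoothedCond (hm : ∀ p, 0 ≤ m p) :
    Tendsto (fun ε => crossEnt m g (smoothedCond m g ε)) (𝓝 0) (𝓝 (condEnt m g)) := by
  have h0 : smoothedCond m g 0 = fiberCond m g := by
    ext t z
    simp [smoothedCond, fiberCond_eq_fiberMass_div]
  rw [← crossEnt_fiberCond, ← h0]
  refine tendsto_finsetSum _ fun x _ => tendsto_finsetSum _ fun z _ => ?_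
  rcases (hm (x, z)).eq_or_lt with hmz | hmz
  · simp only [← hmz, zero_mul, tendsto_const_nhds]
  have hW := hmz.trans_le (le_fiberMass g hm x z)
  have hs := hW.trans_le (fiberMass_le_fiberPr g hm (g x) z)
  refine (continuousAt_const.mul (ContinuousAt.log ?_ ?_).neg).tendsto
  · exact (continuousAt_const.add continuousAt_id).div
      (continuousAt_const.add (continuousAt_const.mul continuousAt_id)) (by simp [hs.ne'])
  · rw [h0, fiberCond_eq_fiberMass_div]
    exact (div_pos hW hs).ne'

theorem exists_isPosKernel_crossEnt_lt [Nonempty Z] (hm : ∀ p, 0 ≤ m p) {w : ℝ}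
    (hw : condEnt m g < w) : ∃ K : T → Z → ℝ, IsPosKernel K ∧ crossEnt m g K < w := by
  obtain ⟨ε, hlt, hε⟩ := (((tendsto_crossEnt_smoothedCond g hm).mono_left nhdsWithin_le_nhds
    |>.eventually (gt_mem_nhds hw)).and (self_mem_nhdsWithin (s := Set.Ioi 0))).exists
  exact ⟨_, isPosKernel_smoothedCond g hm hε, hlt⟩

theorem sInf_crossEnt_sub [Nonempty Z] (hm : ∀ p, 0 ≤ m p) (b : ℝ) :
    sInf {v | ∃ K : T → Z → ℝ, IsPosKernel K ∧ v = crossEnt m g K - b} =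
      condEnt m g - b := by
  refine csInf_eq_of_forall_ge_of_forall_gt_exists_lt ?_ ?_ fun w hw => ?_
  · obtain ⟨K, hK, -⟩ := exists_isPosKernel_crossEnt_lt g hm (lt_add_one (condEnt m g))
    exact ⟨_, K, hK, rfl⟩
  · rintro _ ⟨K, hK, rfl⟩
    linarith [condEnt_le_crossEnt g hm hK]
  · obtain ⟨K, hK, hlt⟩ := exists_isPosKernel_crossEnt_lt g hm (sub_lt_iff_lt_add.mp hw)
    exact ⟨_, ⟨K, hK, rfl⟩, by linarith⟩

theorem sSup_sub_mul_crossEnt [Nonempty Z] (hm : ∀ p, 0 ≤ m p) (a : ℝ) {lam : ℝ}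
    (hlam : 0 < lam) :
    sSup {w | ∃ K : T → Z → ℝ, IsPosKernel K ∧ w = a - lam * crossEnt m g K} =
      a - lam * condEnt m g := by
  refine csSup_eq_of_forall_le_of_forall_lt_exists_gt ?_ ?_ fun w hw => ?_
  · obtain ⟨K, hK, -⟩ := exists_isPosKernel_crossEnt_lt g hm (lt_add_one (condEnt m g))
    exact ⟨_, K, hK, rfl⟩
  · rintro _ ⟨K, hK, rfl⟩
    exact sub_le_sub_left (mul_le_mul_of_nonneg_left (condEnt_le_crossEnt g hm hK) hlam.le) a
  · have : condEnt m g < (a - w) / lam := by rw [lt_div_iff₀ hlam]; linarith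
    obtain ⟨K, hK, hlt⟩ := exists_isPosKernel_crossEnt_lt g hm this
    refine ⟨_, ⟨K, hK, rfl⟩, ?_⟩
    rw [lt_div_iff₀ hlam] at hlt
    linarith

end Fibers

theorem condEnt_comp_of_injective {X Z T S : Type*} [Fintype X] [Fintype Z] [DecidableEq T]
    [DecidableEq S] (m : X × Z → ℝ) (g : X → T) {φ : T → S} (hφ : φ.Injective) :
    condEnt m (fun x => φ (g x)) = condEnt m g := by
  rw [condEnt, condEnt, ← Function.comp_def, ← image_image, sum_image hφ.injOn]
  simp only [fiberCond, fiberPr, Function.comp_apply, hφ.eq_iff]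

theorem minimax_eq_virtual_value_general
    {X Y Z F : Type*} [Fintype X] [Fintype Y] [Fintype Z]
    [Nonempty Y] [Nonempty Z]
    [DecidableEq F] [DecidableEq (Y → ℝ)]
    (q : X × Y × Z → ℝ) (hq0 : ∀ p, 0 ≤ q p)
    (qXY : X × Y → ℝ) (hqXY : ∀ x y, qXY (x, y) = ∑ z, q (x, y, z))
    (qXZ : X × Z → ℝ) (hqXZ : ∀ x z, qXZ (x, z) = ∑ y, q (x, y, z))
    (E : X → F) (lam : ℝ) (hlam : 0 < lam) :
    sInf { v : ℝ | ∃ P : F → Y → ℝ,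
        ((∀ e y, 0 < P e y) ∧ (∀ e, ∑ y, P e y = 1)) ∧
        v = sSup { w : ℝ | ∃ D : F × (Y → ℝ) → Z → ℝ,
          ((∀ c z, 0 < D c z) ∧ (∀ c, ∑ z, D c z = 1)) ∧
          w = (∑ x, ∑ y, qXY (x, y) * (-Real.log (P (E x) y))) -
            lam * (∑ x, ∑ z, qXZ (x, z) *
              (-Real.log (D (E x, P (E x)) z))) } } =
      condEnt qXY E -
        lam * condEnt qXZ (fun x => (E x, fiberCond qXY E (E x))) := by
  have hXY : ∀ p, 0 ≤ qXY p := fun ⟨x, y⟩ => hqXY x y ▸ sum_nonneg fun z _ => hq0 _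
  have hXZ : ∀ p, 0 ≤ qXZ p := fun ⟨x, z⟩ => hqXZ x z ▸ sum_nonneg fun y _ => hq0 _
  have hgraph (h : F → Y → ℝ) : condEnt qXZ (fun x => (E x, h (E x))) = condEnt qXZ E :=
    condEnt_comp_of_injective qXZ E (φ := fun t => (t, h t)) fun _ _ => congrArg Prod.fst
  have inner (P : F → Y → ℝ) :
      sSup {w | ∃ D, IsPosKernel D ∧
        w = crossEnt qXY E P - lam * crossEnt qXZ (fun x => (E x, P (E x))) D} =
      crossEnt qXY E P - lam * condEnt qXZ E := by
    rw [sSup_sub_mul_crossEnt _ hXZ _ hlam, hgraph]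
  have outer := sInf_crossEnt_sub E hXY (lam * condEnt qXZ E)
  simp only [← inner] at outer
  rw [hgraph]
  simpa only [crossEnt, IsPosKernel] using outer

/-- Minimizing the value function over predictors `P` after maximizing over
discriminators `D` yields the virtual value function
`V(E) = H(y|E(x)) − λ·H(z | E(x), q_y(·|E(x)))`. -/
theorem minimax_eq_virtual_value
    {X Y Z F : Type*} [Fintype X] [Fintype Y] [Fintype Z] [Fintype F]
    [Nonempty X] [Nonempty Y] [Nonempty Z] [Nonempty F]
    [DecidableEq F] [DecidableEq (Y → ℝ)]
    (q : X × Y × Z → ℝ) (hq0 : ∀ p, 0 ≤ q p) (hq1 : ∑ p, q p = 1)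
    (hpos : ∀ x, 0 < ∑ y, ∑ z, q (x, y, z))
    (qXY : X × Y → ℝ) (hqXY : ∀ x y, qXY (x, y) = ∑ z, q (x, y, z))
    (qXZ : X × Z → ℝ) (hqXZ : ∀ x z, qXZ (x, z) = ∑ y, q (x, y, z))
    (E : X → F) (lam : ℝ) (hlam : 0 < lam) :
    sInf { v : ℝ | ∃ P : F → Y → ℝ,
        ((∀ e y, 0 < P e y) ∧ (∀ e, ∑ y, P e y = 1)) ∧
        v = sSup { w : ℝ | ∃ D : F × (Y → ℝ) → Z → ℝ,
          ((∀ c z, 0 < D c z) ∧ (∀ c, ∑ z, D c z = 1)) ∧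
          w = (∑ x, ∑ y, qXY (x, y) * (-Real.log (P (E x) y))) -
            lam * (∑ x, ∑ z, qXZ (x, z) *
              (-Real.log (D (E x, P (E x)) z))) } } =
      condEnt qXY E -
        lam * condEnt qXZ (fun x => (E x, fiberCond qXY E (E x))) :=
  minimax_eq_virtual_value_general q hq0 qXY hqXY qXZ hqXZ E lam hlam
end
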